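/- arXiv:2010.10667 — 2 statements merged into one kernel-verified Lean document; each statement's English description precedes it below -/
import Mathlib

section
/- Let C be a completely distributive complete lattice with space functions (f_k)_{k∈K}. Define δ(c) := ⋀{ ⋁_{k∈K} f_k(a_k) | (a_k)_{k∈K} is a K-tuple in C with ⋁_{k∈K} a_k ⊒ c }. Then δ equals the greatest space function that is pointwise below every f_k, k ∈ K. -/
/-- A self-map of a complete lattice preserving arbitrary joins. -/
def SpaceFun {C : Type*} [CompleteLattice C] (f : C → C) : Prop :=
  ∀ S : Set C, f (sSup S) = sSup (f '' S)

lemma spaceFun_iSup {C : Type*} [CompleteLattice C] {g : C → C} (hg : SpaceFun g)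
    {ι : Sort*} (h : ι → C) : g (⨆ i, h i) = ⨆ i, g (h i) := by
  have := hg (Set.range h)
  rw [← sSup_range, this, ← Set.range_comp, sSup_range]
  rfl

lemma spaceFun_bot {C : Type*} [CompleteLattice C] {g : C → C} (hg : SpaceFun g) :
    g ⊥ = ⊥ := by
  have := hg ∅
  simpa using this

lemma spaceFun_mono {C : Type*} [CompleteLattice C] {g : C → C} (hg : SpaceFun g) :
    Monotone g := by
  intro x y hxy
  have h1 : y = sSup {x, y} := by simp [sup_eq_right.2 hxy]
  have h2 : g y = g x ⊔ g y := by
    rw [h1, hg]; simp [Set.image_pair]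
  rw [h2]; exact le_sup_left

noncomputable def deltaFun {C K : Type*} [CompleteLattice C] (f : K → C → C) (c : C) : C :=
  ⨅ p : {a : K → C // c ≤ ⨆ k, a k}, ⨆ k, f k (p.1 k)

lemma deltaFun_mono {C K : Type*} [CompleteLattice C] (f : K → C → C) :
    Monotone (deltaFun f) := by
  intro x y hxy
  refine le_iInf fun p => ?_
  exact iInf_le (fun q : {a : K → C // x ≤ ⨆ k, a k} => ⨆ k, f k (q.1 k))
    ⟨p.1, le_trans hxy p.2⟩

lemma deltaFun_space {C K : Type*} [CompletelyDistribLattice C] (f : K → C → C)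
    (hf : ∀ k, SpaceFun (f k)) : SpaceFun (deltaFun f) := by
  intro S
  apply le_antisymm
  · have hrw : sSup (deltaFun f '' S) = ⨆ s : S, deltaFun f s := by
      rw [sSup_image, iSup_subtype]
    rw [hrw]
    simp only [deltaFun]
    rw [iSup_iInf_eq]
    refine le_iInf fun g => ?_
    set b : K → C := fun k => ⨆ s : S, (g s).1 k with hb
    have hbS : sSup S ≤ ⨆ k, b k := by
      rw [sSup_eq_iSup']
      refine iSup_le fun s => le_trans (g s).2 ?_
      refine iSup_le fun k => ?_
      exact le_trans (le_iSup (fun s' : S => (g s').1 k) s) (le_iSup b k)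
    refine le_trans (iInf_le _ ⟨b, hbS⟩) ?_
    have : ∀ k, f k (b k) = ⨆ s : S, f k ((g s).1 k) := fun k =>
      spaceFun_iSup (hf k) (fun s : S => (g s).1 k)
    calc ⨆ k, f k (b k) = ⨆ k, ⨆ s : S, f k ((g s).1 k) := by simp_rw [this]
      _ = ⨆ s : S, ⨆ k, f k ((g s).1 k) := iSup_comm
      _ ≤ _ := le_rfl
  · refine sSup_le fun d hd => ?_
    obtain ⟨s, hs, rfl⟩ := hd
    exact deltaFun_mono f (le_sSup hs)

lemma deltaFun_le {C K : Type*} [CompleteLattice C] (f : K → C → C)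
    (hf : ∀ k, SpaceFun (f k)) (k : K) : deltaFun f ≤ f k := by
  classical
  intro c
  set a : K → C := fun k' => if k' = k then c else ⊥ with ha
  have hac : c ≤ ⨆ k', a k' := by
    have : a k = c := by simp [ha]
    rw [← this]; exact le_iSup a k
  refine le_trans (iInf_le _ ⟨a, hac⟩) ?_
  refine iSup_le fun k' => ?_
  by_cases h : k' = k
  · subst h; simp [ha]
  · simp [ha, h, spaceFun_bot (hf k')]

/-- In a completely distributive lattice, the greatest space function below
all f_k equals δ(c) = ⋀{ ⋁_k f_k(a_k) | (a_k) a K-tuple with ⋁_k a_k ⊒ c }. -/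
theorem stmt_13 {C K : Type*} [CompletelyDistribLattice C] (f : K → C → C)
    (hf : ∀ k, SpaceFun (f k)) (Δ : C → C)
    (hΔ : IsGreatest {g | SpaceFun g ∧ ∀ k, g ≤ f k} Δ) :
    ∀ c : C,
      Δ c = sInf {d | ∃ a : K → C, c ≤ (⨆ k, a k) ∧ d = ⨆ k, f k (a k)} := by
  intro c
  have hset : {d | ∃ a : K → C, c ≤ (⨆ k, a k) ∧ d = ⨆ k, f k (a k)} =
      Set.range (fun p : {a : K → C // c ≤ ⨆ k, a k} => ⨆ k, f k (p.1 k)) := by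
    ext d
    constructor
    · rintro ⟨a, h1, rfl⟩; exact ⟨⟨a, h1⟩, rfl⟩
    · rintro ⟨⟨a, h1⟩, rfl⟩; exact ⟨a, h1, rfl⟩
  rw [hset, sInf_range]
  have hdelta : deltaFun f ∈ {g | SpaceFun g ∧ ∀ k, g ≤ f k} :=
    ⟨deltaFun_space f hf, deltaFun_le f hf⟩
  apply le_antisymm
  · refine le_iInf fun p => ?_
    calc Δ c ≤ Δ (⨆ k, p.1 k) := spaceFun_mono hΔ.1.1 p.2
      _ = ⨆ k, Δ (p.1 k) := spaceFun_iSup hΔ.1.1 p.1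
      _ ≤ ⨆ k, f k (p.1 k) := iSup_mono fun k => hΔ.1.2 k (p.1 k)
  · exact hΔ.2 hdelta c
end

section
/- Let C be a completely distributive complete lattice with space functions (f_i)_{i∈G}, and let Δ_I denote the greatest space function below every f_i, i ∈ I. If I = J ∪ K, then for every c ∈ C: Δ_I(c) = ⋀{ Δ_J(a) ⊔ Δ_K(b) | a, b ∈ C and a ⊔ b ⊒ c }. -/
theorem SpaceFun.bot' {C : Type*} [CompleteLattice C] {f : C → C} (hf : SpaceFun f) :
    f ⊥ = ⊥ := by
  have := hf ∅; simpa using this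

theorem SpaceFun.mono' {C : Type*} [CompleteLattice C] {f : C → C} (hf : SpaceFun f) :
    Monotone f := by
  intro a b hab
  have h := hf {a, b}
  rw [Set.image_pair] at h
  rw [sSup_pair, sSup_pair, sup_eq_right.mpr hab] at h
  exact le_sup_left.trans h.ge

theorem SpaceFun.sup' {C : Type*} [CompleteLattice C] {f : C → C} (hf : SpaceFun f)
    (a b : C) : f (a ⊔ b) = f a ⊔ f b := by
  have h := hf {a, b}
  rw [Set.image_pair, sSup_pair, sSup_pair] at h
  exact h

theorem SpaceFun.iSup' {C : Type*} [CompleteLattice C] {f : C → C} (hf : SpaceFun f)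
    {ι : Sort*} (x : ι → C) : f (⨆ i, x i) = ⨆ i, f (x i) := by
  have h := hf (Set.range x)
  rw [← Set.range_comp, sSup_range, sSup_range] at h
  exact h

/-- Compositionality in completely distributive lattices: if I = J ∪ K then
Δ_I(c) = ⋀{ Δ_J(a) ⊔ Δ_K(b) | a ⊔ b ⊒ c }. -/
theorem stmt_14 {C G : Type*} [CompletelyDistribLattice C] (f : G → C → C)
    (hf : ∀ i, SpaceFun (f i)) (Δ : Set G → C → C)
    (hΔ : ∀ I : Set G, IsGreatest {g | SpaceFun g ∧ ∀ i ∈ I, g ≤ f i} (Δ I))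
    (I J K : Set G) (hI : I = J ∪ K) :
    ∀ c : C, Δ I c = sInf {d | ∃ a b : C, c ≤ a ⊔ b ∧ d = Δ J a ⊔ Δ K b} := by
  set g : C → C := fun c => sInf {d | ∃ a b : C, c ≤ a ⊔ b ∧ d = Δ J a ⊔ Δ K b} with hgdef
  have hmem : ∀ c a b : C, c ≤ a ⊔ b → g c ≤ Δ J a ⊔ Δ K b := fun c a b h =>
    sInf_le (s := {d | ∃ a b : C, c ≤ a ⊔ b ∧ d = Δ J a ⊔ Δ K b}) ⟨a, b, h, rfl⟩
  have hIsf : SpaceFun (Δ I) := (hΔ I).1.1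
  have hJsf : SpaceFun (Δ J) := (hΔ J).1.1
  have hKsf : SpaceFun (Δ K) := (hΔ K).1.1
  have hJI : Δ I ≤ Δ J := (hΔ J).2 ⟨hIsf, fun i hi => (hΔ I).1.2 i (hI ▸ Set.mem_union_left K hi)⟩
  have hKI : Δ I ≤ Δ K := (hΔ K).2 ⟨hIsf, fun i hi => (hΔ I).1.2 i (hI ▸ Set.mem_union_right J hi)⟩
  -- Δ I ≤ g
  have hle : ∀ c, Δ I c ≤ g c := by
    intro c
    apply le_sInf
    rintro d ⟨a, b, hab, rfl⟩
    calc Δ I c ≤ Δ I (a ⊔ b) := hIsf.mono' hab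
      _ = Δ I a ⊔ Δ I b := hIsf.sup' a b
      _ ≤ Δ J a ⊔ Δ K b := sup_le_sup (hJI a) (hKI b)
  -- g as an iInf
  have hgi : ∀ c : C, g c = ⨅ p : {p : C × C // c ≤ p.1 ⊔ p.2}, (Δ J p.1.1 ⊔ Δ K p.1.2) := by
    intro c
    apply le_antisymm
    · apply le_iInf
      intro p
      exact hmem c p.1.1 p.1.2 p.2
    · apply le_sInf
      rintro d ⟨a, b, hab, rfl⟩
      exact iInf_le (fun p : {p : C × C // c ≤ p.1 ⊔ p.2} => Δ J p.1.1 ⊔ Δ K p.1.2) ⟨(a, b), hab⟩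
  -- g is a space function
  have hgsf : SpaceFun g := by
    intro S
    apply le_antisymm
    · -- g (sSup S) ≤ sSup (g '' S)
      have hrhs : sSup (g '' S) = ⨆ s : S, g s := sSup_image'
      rw [hrhs]
      have : (⨆ s : S, g s)
          = ⨅ φ : ∀ s : S, {p : C × C // (s : C) ≤ p.1 ⊔ p.2},
              ⨆ s : S, (Δ J (φ s).1.1 ⊔ Δ K (φ s).1.2) := by
        simp_rw [hgi]
        exact iSup_iInf_eq
      rw [this]
      apply le_iInf
      intro φ
      set A := ⨆ s : S, (φ s).1.1
      set B := ⨆ s : S, (φ s).1.2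
      have hcov : sSup S ≤ A ⊔ B := by
        apply sSup_le
        intro s hs
        exact ((φ ⟨s, hs⟩).2).trans
          (sup_le_sup (le_iSup (fun s : S => (φ s).1.1) ⟨s, hs⟩)
            (le_iSup (fun s : S => (φ s).1.2) ⟨s, hs⟩))
      have h1 : g (sSup S) ≤ Δ J A ⊔ Δ K B := hmem _ A B hcov
      calc g (sSup S) ≤ Δ J A ⊔ Δ K B := h1
        _ = (⨆ s : S, Δ J (φ s).1.1) ⊔ (⨆ s : S, Δ K (φ s).1.2) := by
            rw [hJsf.iSup', hKsf.iSup']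
        _ = ⨆ s : S, (Δ J (φ s).1.1 ⊔ Δ K (φ s).1.2) := (iSup_sup_eq).symm
    · -- sSup (g '' S) ≤ g (sSup S)
      apply sSup_le
      rintro d ⟨s, hs, rfl⟩
      have hmono : Monotone g := by
        intro x y hxy
        apply le_sInf
        rintro d ⟨a, b, hab, rfl⟩
        exact hmem x a b (hxy.trans hab)
      exact hmono (le_sSup hs)
  -- g ≤ f i for all i ∈ I
  have hgf : ∀ i ∈ I, g ≤ f i := by
    intro i hi c
    rcases hI ▸ hi with hiJ | hiK
    · calc g c ≤ Δ J c ⊔ Δ K ⊥ := hmem c c ⊥ le_sup_left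
        _ = Δ J c := by rw [hKsf.bot', sup_bot_eq]
        _ ≤ f i c := (hΔ J).1.2 i hiJ c
    · calc g c ≤ Δ J ⊥ ⊔ Δ K c := hmem c ⊥ c le_sup_right
        _ = Δ K c := by rw [hJsf.bot', bot_sup_eq]
        _ ≤ f i c := (hΔ K).1.2 i hiK c
  have hge : g ≤ Δ I := (hΔ I).2 ⟨hgsf, hgf⟩
  intro c
  exact le_antisymm (hle c) (hge c)
end
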